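/- arXiv:1705.09385 — 7 statements merged into one kernel-verified Lean document; each statement's English description precedes it below -/
import Mathlib

section
/- If G is the graph formed by joining t ≥ 1 internally disjoint paths of equal length at least 3, all with the same endpoints a and b, then the shortest path graph S(G,a,b) is the empty graph on t vertices (t vertices and no edges). -/
open SimpleGraph

/-- The type of `a,b`-geodesics in `G`: paths from `a` to `b` of length `d_G(a,b)`. -/
def Geodesic {V : Type*} (G : SimpleGraph V) (a b : V) : Type _ :=
  {p : G.Walk a b // p.IsPath ∧ p.length = G.dist a b}

/-- Two geodesics differ at exactly the index `i` (comparing vertex sequences). -/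
def DiffAt {V : Type*} {G : SimpleGraph V} {a b : V} (U W : Geodesic G a b) (i : ℕ) : Prop :=
  U.1.support.getD i a ≠ W.1.support.getD i a ∧
    ∀ j, j ≠ i → U.1.support.getD j a = W.1.support.getD j a

/-- The shortest path graph `S(G,a,b)`: vertices are `a,b`-geodesics, adjacent iff their
vertex sequences differ in exactly one position. -/
def SPG {V : Type*} (G : SimpleGraph V) (a b : V) : SimpleGraph (Geodesic G a b) where
  Adj U W := ∃ i, DiffAt U W i
  symm := by
    constructor
    rintro U W ⟨i, hne, hj⟩
    exact ⟨i, hne.symm, fun j hji => (hj j hji).symm⟩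
  loopless := by
    constructor
    rintro U ⟨i, hne, -⟩
    exact hne rfl

/-- A graph is a shortest path graph if it is isomorphic to `S(G,a,b)` for some `G`, `a ≠ b`. -/
def IsSPGraph {α : Type*} (H : SimpleGraph α) : Prop :=
  ∃ (V : Type) (G : SimpleGraph V) (a b : V), a ≠ b ∧ Nonempty (H ≃g SPG G a b)

/-- The graph formed by joining `t` internally disjoint paths of equal length `ℓ`,
all with endpoints `a = Sum.inr false` and `b = Sum.inr true`; the internal vertices of
the `i`-th path are `(i, 0), …, (i, ℓ-2)`. -/
def thetaGraph (t ℓ : ℕ) : SimpleGraph ((Fin t × Fin (ℓ - 1)) ⊕ Bool) :=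
  SimpleGraph.fromRel (fun u v =>
    match u, v with
    | Sum.inr false, Sum.inl (_, j) => j.val = 0
    | Sum.inl (i, j), Sum.inl (i', j') => i = i' ∧ j'.val = j.val + 1
    | Sum.inl (_, j), Sum.inr true => j.val = ℓ - 2
    | _, _ => False)

/-!
Let `level` be the distance from `a`: `0` at `a`, `j + 1` at the `j`-th internal vertex of a
path, `ℓ` at `b`. It grows by at most one along an edge, so every `a,b`-walk has length at least
`ℓ`, and along a walk of length exactly `ℓ` it grows by exactly one at each step. Since two
internal vertices are adjacent only if they lie on the same path, such a walk stays on one path,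
so the geodesics are exactly the `t` paths. Two distinct paths differ at each of the positions
`1, …, ℓ - 1`, which are at least two as `ℓ ≥ 3`; hence no two geodesics are adjacent in `S(G,a,b)`.
-/

namespace SimpleGraph.Walk

variable {V : Type*} {G : SimpleGraph V}

lemma support_getD_eq_getVert {u v : V} (p : G.Walk u v) {k : ℕ} (hk : k ≤ p.length) (x : V) :
    p.support.getD k x = p.getVert k := by
  rw [getVert_eq_support_getElem p hk, List.getD_eq_getElem]

def ofSeq (g : ℕ → V) : (n : ℕ) → (∀ k < n, G.Adj (g k) (g (k + 1))) → G.Walk (g 0) (g n)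
  | 0, _ => nil
  | n + 1, h =>
    cons (h 0 n.succ_pos) (ofSeq (fun k => g (k + 1)) n fun k hk => h (k + 1) (by omega))

lemma length_ofSeq (g : ℕ → V) (n : ℕ) (h : ∀ k < n, G.Adj (g k) (g (k + 1))) :
    (ofSeq g n h).length = n := by
  induction n generalizing g with
  | zero => rfl
  | succ n ih => simp [ofSeq, ih]

lemma getVert_ofSeq (g : ℕ → V) (n : ℕ) (h : ∀ k < n, G.Adj (g k) (g (k + 1))) {k : ℕ}
    (hk : k ≤ n) : (ofSeq g n h).getVert k = g k := by
  induction n generalizing g k with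
  | zero => obtain rfl : k = 0 := by omega
            rfl
  | succ n ih =>
    cases k with
    | zero => rfl
    | succ k => simp [ofSeq, ih _ _ (by omega : k ≤ n)]

variable {f : V → ℕ}

lemma le_add_length (hf : ∀ u v, G.Adj u v → f v ≤ f u + 1) {u v : V} (p : G.Walk u v) :
    f v ≤ f u + p.length := by
  induction p with
  | nil => simp
  | cons h _ ih => have := hf _ _ h; simp only [length_cons]; omega

lemma apply_getVert_of_eq_add_length (hf : ∀ u v, G.Adj u v → f v ≤ f u + 1) {u v : V}
    (p : G.Walk u v) (hp : f v = f u + p.length) {k : ℕ} (hk : k ≤ p.length) :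
    f (p.getVert k) = f u + k := by
  induction p generalizing k with
  | nil => simp_all
  | cons h q ih =>
    have h₁ := hf _ _ h
    have h₂ := le_add_length hf q
    simp only [length_cons] at hp hk
    cases k with
    | zero => simp
    | succ k => rw [getVert_cons_succ, ih (by omega) (by omega)]; omega

end SimpleGraph.Walk

namespace thetaGraph

variable {t ℓ : ℕ}

def level (ℓ : ℕ) : (Fin t × Fin (ℓ - 1)) ⊕ Bool → ℕ
  | Sum.inr false => 0
  | Sum.inl (_, j) => j.val + 1
  | Sum.inr true => ℓ

/-- The `k`-th vertex of the `i`-th path, extended by `b` for `k ≥ ℓ` so that it matches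
`Walk.getVert` of that path. -/
def branchVertex (ℓ : ℕ) (i : Fin t) (k : ℕ) : (Fin t × Fin (ℓ - 1)) ⊕ Bool :=
  if hk : k = 0 then Sum.inr false
  else if hkℓ : k < ℓ then Sum.inl (i, ⟨k - 1, by omega⟩) else Sum.inr true

lemma branchVertex_zero (i : Fin t) : branchVertex ℓ i 0 = Sum.inr false := rfl

lemma branchVertex_of_le {i : Fin t} {k : ℕ} (hk : ℓ ≤ k) (hℓ : 1 ≤ ℓ) :
    branchVertex ℓ i k = Sum.inr true := by
  simp only [branchVertex, dif_neg (show k ≠ 0 by omega), dif_neg (show ¬k < ℓ by omega)]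

lemma branchVertex_left_injective {k : ℕ} (hk : 0 < k) (hkℓ : k < ℓ) :
    Function.Injective fun i : Fin t => branchVertex ℓ i k := by
  intro i i' h
  simpa [branchVertex, hk.ne', hkℓ] using h

lemma level_le_succ_of_adj {u v : (Fin t × Fin (ℓ - 1)) ⊕ Bool} (h : (thetaGraph t ℓ).Adj u v) :
    level ℓ v ≤ level ℓ u + 1 := by
  rcases u with ⟨i, j⟩ | _ | _ <;> rcases v with ⟨i', j'⟩ | _ | _ <;>
    grind [thetaGraph, fromRel_adj, level]

lemma level_le_add_length {u v : (Fin t × Fin (ℓ - 1)) ⊕ Bool} (p : (thetaGraph t ℓ).Walk u v) :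
    level ℓ v ≤ level ℓ u + p.length :=
  p.le_add_length fun _ _ => level_le_succ_of_adj

lemma branchVertex_adj_succ (hℓ : 2 ≤ ℓ) (i : Fin t) {k : ℕ} (hk : k < ℓ) :
    (thetaGraph t ℓ).Adj (branchVertex ℓ i k) (branchVertex ℓ i (k + 1)) := by
  unfold branchVertex
  split_ifs <;> grind [thetaGraph, fromRel_adj]

lemma exists_eq_branchVertex_one_of_adj {v : (Fin t × Fin (ℓ - 1)) ⊕ Bool}
    (h : (thetaGraph t ℓ).Adj (Sum.inr false) v) : ∃ i, v = branchVertex ℓ i 1 := by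
  rcases v with ⟨i, j⟩ | _ | _
  · exact ⟨i, by grind [thetaGraph, fromRel_adj, branchVertex]⟩
  all_goals simp [thetaGraph] at h

lemma eq_branchVertex_succ_of_adj {i : Fin t} {k : ℕ} (hk : 1 ≤ k)
    {v : (Fin t × Fin (ℓ - 1)) ⊕ Bool} (h : (thetaGraph t ℓ).Adj (branchVertex ℓ i k) v)
    (hv : level ℓ v = k + 1) : v = branchVertex ℓ i (k + 1) := by
  unfold branchVertex at *
  rcases v with ⟨i', j'⟩ | _ | _ <;> split_ifs at * <;> grind [thetaGraph, fromRel_adj, level]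

def branchWalk (hℓ : 2 ≤ ℓ) (i : Fin t) : (thetaGraph t ℓ).Walk (Sum.inr false) (Sum.inr true) :=
  (Walk.ofSeq (branchVertex ℓ i) ℓ fun _ => branchVertex_adj_succ hℓ i).copy
    (branchVertex_zero i) (branchVertex_of_le le_rfl (by omega))

lemma length_branchWalk (hℓ : 2 ≤ ℓ) (i : Fin t) : (branchWalk hℓ i).length = ℓ := by
  rw [branchWalk, Walk.length_copy, Walk.length_ofSeq]

lemma getVert_branchWalk (hℓ : 2 ≤ ℓ) (i : Fin t) (k : ℕ) :
    (branchWalk hℓ i).getVert k = branchVertex ℓ i k := by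
  rcases le_or_gt k ℓ with hk | hk
  · rw [branchWalk, Walk.getVert_copy, Walk.getVert_ofSeq _ _ _ hk]
  · rw [Walk.getVert_of_length_le _ (by rw [length_branchWalk]; omega),
      branchVertex_of_le hk.le (by omega)]

lemma dist_eq_of_reachable (hℓ : 2 ≤ ℓ)
    (hr : (thetaGraph t ℓ).Reachable (Sum.inr false) (Sum.inr true)) :
    (thetaGraph t ℓ).dist (Sum.inr false) (Sum.inr true) = ℓ := by
  obtain ⟨p, hp⟩ := hr.exists_walk_length_eq_dist
  have hlong : ℓ ≤ p.length := by simpa [level] using level_le_add_length p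
  obtain ⟨i, -⟩ :=
    exists_eq_branchVertex_one_of_adj (p.getVert_zero ▸ p.adj_getVert_succ (by omega))
  refine le_antisymm ?_ (hp ▸ hlong)
  simpa [length_branchWalk] using dist_le (branchWalk hℓ i)

lemma exists_getVert_eq_branchVertex_of_length_eq (hℓ : 2 ≤ ℓ)
    (p : (thetaGraph t ℓ).Walk (Sum.inr false) (Sum.inr true)) (hp : p.length = ℓ) :
    ∃ i, ∀ k, p.getVert k = branchVertex ℓ i k := by
  have hlevel : ∀ k ≤ ℓ, level ℓ (p.getVert k) = k := fun k hk => by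
    simpa [level] using
      p.apply_getVert_of_eq_add_length (fun _ _ => level_le_succ_of_adj) (by simp [level, hp])
        (hp.symm ▸ hk)
  obtain ⟨i, hi⟩ :=
    exists_eq_branchVertex_one_of_adj (p.getVert_zero ▸ p.adj_getVert_succ (by omega))
  have hinner : ∀ k, 1 ≤ k → k ≤ ℓ → p.getVert k = branchVertex ℓ i k := by
    intro k hk1 hkℓ
    induction k, hk1 using Nat.le_induction with
    | base => exact hi
    | succ k hk1 ih =>
      exact eq_branchVertex_succ_of_adj hk1 (ih (by omega) ▸ p.adj_getVert_succ (by omega))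
        (hlevel _ hkℓ)
  refine ⟨i, fun k => ?_⟩
  rcases Nat.eq_zero_or_pos k with rfl | hk
  · simp [branchVertex_zero]
  rcases le_or_gt k ℓ with hkℓ | hkℓ
  · exact hinner k hk hkℓ
  · rw [Walk.getVert_of_length_le _ (by omega), branchVertex_of_le hkℓ.le (by omega)]

def branchGeodesic (hℓ : 2 ≤ ℓ) (i : Fin t) :
    Geodesic (thetaGraph t ℓ) (Sum.inr false) (Sum.inr true) :=
  have h : (branchWalk hℓ i).length = (thetaGraph t ℓ).dist (Sum.inr false) (Sum.inr true) := by
    rw [length_branchWalk, dist_eq_of_reachable hℓ ⟨branchWalk hℓ i⟩]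
  ⟨branchWalk hℓ i, (branchWalk hℓ i).isPath_of_length_eq_dist h, h⟩

lemma branchGeodesic_support_getD (hℓ : 2 ≤ ℓ) (i : Fin t) {k : ℕ} (hk : k ≤ ℓ)
    (x : (Fin t × Fin (ℓ - 1)) ⊕ Bool) :
    (branchGeodesic hℓ i).1.support.getD k x = branchVertex ℓ i k := by
  rw [branchGeodesic, Walk.support_getD_eq_getVert _ (by rwa [length_branchWalk]),
    getVert_branchWalk]

lemma branchGeodesic_injective (hℓ : 2 ≤ ℓ) :
    Function.Injective (branchGeodesic (t := t) hℓ) := by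
  intro i i' h
  apply branchVertex_left_injective one_pos hℓ
  simpa only [branchGeodesic_support_getD hℓ _ (by omega : 1 ≤ ℓ)] using
    congrArg (fun U : Geodesic _ _ _ => U.1.support.getD 1 (Sum.inr false)) h

lemma branchGeodesic_surjective (hℓ : 2 ≤ ℓ) :
    Function.Surjective (branchGeodesic (t := t) hℓ) := by
  rintro ⟨p, -, hp⟩
  rw [dist_eq_of_reachable hℓ ⟨p⟩] at hp
  obtain ⟨i, hi⟩ := exists_getVert_eq_branchVertex_of_length_eq hℓ p hp
  exact ⟨i, Subtype.ext <| Walk.ext_getVert fun k => by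
    rw [hi, branchGeodesic, getVert_branchWalk]⟩

noncomputable def geodesicEquiv (hℓ : 2 ≤ ℓ) :
    Fin t ≃ Geodesic (thetaGraph t ℓ) (Sum.inr false) (Sum.inr true) :=
  Equiv.ofBijective _ ⟨branchGeodesic_injective hℓ, branchGeodesic_surjective hℓ⟩

lemma spg_eq_bot (hℓ : 3 ≤ ℓ) : SPG (thetaGraph t ℓ) (Sum.inr false) (Sum.inr true) = ⊥ := by
  ext U W
  obtain ⟨i, rfl⟩ := branchGeodesic_surjective (by omega) U
  obtain ⟨i', rfl⟩ := branchGeodesic_surjective (by omega) W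
  simp only [SPG, DiffAt, bot_adj, iff_false, not_exists, not_and]
  intro k hne hall
  have hii' : i ≠ i' := by rintro rfl; exact hne rfl
  obtain ⟨m, hmk, hm0, hmℓ⟩ : ∃ m, m ≠ k ∧ 0 < m ∧ m < ℓ := by
    rcases eq_or_ne k 1 with rfl | hk
    · exact ⟨2, by omega, by omega, by omega⟩
    · exact ⟨1, hk.symm, by omega, by omega⟩
  have hm := hall m hmk
  rw [branchGeodesic_support_getD _ _ hmℓ.le, branchGeodesic_support_getD _ _ hmℓ.le] at hm
  exact hii' (branchVertex_left_injective hm0 hmℓ hm)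

end thetaGraph

theorem stmt0_general (t ℓ : ℕ) (hℓ : 3 ≤ ℓ) :
    Nonempty (SPG (thetaGraph t ℓ) (Sum.inr false) (Sum.inr true) ≃g
      (⊥ : SimpleGraph (Fin t))) :=
  ⟨⟨(thetaGraph.geodesicEquiv (by omega)).symm, by simp [thetaGraph.spg_eq_bot hℓ]⟩⟩

theorem stmt0 (t ℓ : ℕ) (ht : 1 ≤ t) (hℓ : 3 ≤ ℓ) :
    Nonempty (SPG (thetaGraph t ℓ) (Sum.inr false) (Sum.inr true) ≃g
      (⊥ : SimpleGraph (Fin t))) :=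
  stmt0_general t ℓ hℓ
end

section
/- For every k ≥ 1, the path graph P_k on k edges (k+1 vertices) arises as a shortest path graph; that is, there exists a graph G with vertices a,b such that S(G,a,b) is isomorphic to P_k. -/
open SimpleGraph

/-!
Put a bipartite graph `H` between a layer adjacent to `a` and a layer adjacent to `b`. Then
`d(a,b) = 3`, the geodesics are the paths `a x y b` with `xy` an edge of `H`, and two of them
are adjacent in `S(G,a,b)` iff the edges share exactly one end, so `S(G,a,b)` is the line graph
of `H`. Taking for `H` a path with `k + 1` edges, whose line graph is `P_k`, proves the theorem.
-/

lemma exists_getD_ne_unique_iff {α : Type*} (s u v t u' v' d : α) :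
    (∃ i, [s, u, v, t].getD i d ≠ [s, u', v', t].getD i d ∧
        ∀ j, j ≠ i → [s, u, v, t].getD j d = [s, u', v', t].getD j d) ↔
      (u = u' ∧ v ≠ v') ∨ (u ≠ u' ∧ v = v') := by
  constructor
  · rintro ⟨i, hne, hall⟩
    match i with
    | 0 | 3 | _ + 4 => simp at hne
    | 1 => exact .inr ⟨by simpa using hne, by simpa using hall 2 (by decide)⟩
    | 2 => exact .inl ⟨by simpa using hall 1 (by decide), by simpa using hne⟩
  · rintro (⟨hu, hv⟩ | ⟨hu, hv⟩)
    · refine ⟨2, by simpa using hv, fun j hj => ?_⟩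
      match j with
      | 0 | 1 | 3 | _ + 4 => simp [hu]
      | 2 => contradiction
    · refine ⟨1, by simpa using hu, fun j hj => ?_⟩
      match j with
      | 0 | 2 | 3 | _ + 4 => simp [hv]
      | 1 => contradiction

inductive ThreeLayer (X Y : Type) : Type
  | src
  | left (x : X)
  | right (y : Y)
  | tgt

namespace ThreeLayer

variable {X Y : Type}

def graph (r : X → Y → Prop) : SimpleGraph (ThreeLayer X Y) where
  Adj
    | src, left _ | left _, src | right _, tgt | tgt, right _ => True
    | left x, right y | right y, left x => r x y
    | _, _ => False
  symm := ⟨by rintro (_ | _ | _ | _) (_ | _ | _ | _) h <;> exact h⟩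
  loopless := ⟨by rintro (_ | _ | _ | _) h <;> exact h⟩

variable {r : X → Y → Prop}

def level : ThreeLayer X Y → ℕ
  | src => 0
  | left _ => 1
  | right _ => 2
  | tgt => 3

lemma level_le_of_adj {u v : ThreeLayer X Y} (h : (graph r).Adj u v) : v.level ≤ u.level + 1 := by
  rcases u with _ | _ | _ | _ <;> rcases v with _ | _ | _ | _ <;> simp_all [graph, level]

lemma level_le_add_length {u v : ThreeLayer X Y} (p : (graph r).Walk u v) :
    v.level ≤ u.level + p.length := by
  induction p with
  | nil => simp
  | cons h _ ih =>
    have := level_le_of_adj h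
    rw [Walk.length_cons]
    omega

def threeWalk {x : X} {y : Y} (h : r x y) : (graph r).Walk src tgt :=
  .cons (u := src) (v := left x) trivial <| .cons (v := right y) h <| .cons (v := tgt) trivial .nil

lemma support_threeWalk {x : X} {y : Y} (h : r x y) :
    (threeWalk h).support = [src, left x, right y, tgt] := rfl

lemma isPath_threeWalk {x : X} {y : Y} (h : r x y) : (threeWalk h).IsPath := by
  rw [Walk.isPath_def, support_threeWalk]
  simp

lemma dist_src_tgt {x : X} {y : Y} (h : r x y) : (graph r).dist src tgt = 3 := by
  obtain ⟨p, hp⟩ := (threeWalk h).reachable.exists_walk_length_eq_dist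
  have hge : 3 ≤ 0 + p.length := level_le_add_length p
  have hle : _ ≤ 3 := dist_le (threeWalk h)
  omega

lemma eq_threeWalk_of_length_eq_three (p : (graph r).Walk src tgt) (hp : p.length = 3) :
    ∃ (x : X) (y : Y) (h : r x y), p = threeWalk h := by
  match p, hp with
  | .cons (v := v₁) h₁ (.cons (v := v₂) h₂ (.cons h₃ .nil)), _ =>
    rcases v₁ with _ | x | _ | _ <;> rcases v₂ with _ | _ | y | _ <;>
      first
        | exact ⟨x, y, h₂, rfl⟩
        | exact (h₁ : False).elim | exact (h₂ : False).elim | exact (h₃ : False).elim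
  | .cons _ .nil, hp | .cons _ (.cons _ .nil), hp | .cons _ (.cons _ (.cons _ (.cons _ _))), hp =>
    simp at hp

variable {x₀ : X} {y₀ : Y} (h₀ : r x₀ y₀)

def toGeodesic (e : {e : X × Y // r e.1 e.2}) : Geodesic (graph r) src tgt :=
  ⟨threeWalk e.2, isPath_threeWalk e.2, (dist_src_tgt h₀).symm⟩

lemma support_toGeodesic (e : {e : X × Y // r e.1 e.2}) :
    (toGeodesic h₀ e).1.support = [src, left e.1.1, right e.1.2, tgt] := rfl

lemma toGeodesic_bijective : Function.Bijective (toGeodesic h₀) := by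
  constructor
  · intro e e' he
    have := congrArg (fun p : Geodesic (graph r) src tgt => p.1.support) he
    simp only [support_toGeodesic, List.cons.injEq, left.injEq, right.injEq] at this
    exact Subtype.ext (Prod.ext this.2.1 this.2.2.1)
  · rintro ⟨p, -, hp⟩
    obtain ⟨x, y, h, rfl⟩ := eq_threeWalk_of_length_eq_three p (hp.trans (dist_src_tgt h₀))
    exact ⟨⟨(x, y), h⟩, rfl⟩

lemma spg_adj_toGeodesic_iff (e e' : {e : X × Y // r e.1 e.2}) :
    (SPG (graph r) src tgt).Adj (toGeodesic h₀ e) (toGeodesic h₀ e') ↔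
      (e.1.1 = e'.1.1 ∧ e.1.2 ≠ e'.1.2) ∨ (e.1.1 ≠ e'.1.1 ∧ e.1.2 = e'.1.2) := by
  simp only [SPG, DiffAt, support_toGeodesic, exists_getD_ne_unique_iff, ne_eq, left.injEq,
    right.injEq]

end ThreeLayer

-- The path `y₀ x₀ y₁ x₁ …` with `k + 1` edges; its `n`-th edge is `x_{n/2} y_{(n+1)/2}`.
def zigzag (k : ℕ) (i j : ℕ) : Prop := i + j ≤ k ∧ (j = i ∨ j = i + 1)

def zigzagEdgeEquiv (k : ℕ) : Fin (k + 1) ≃ {e : ℕ × ℕ // zigzag k e.1 e.2} where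
  toFun n := ⟨(n / 2, (n + 1) / 2), by unfold zigzag; omega⟩
  invFun e := ⟨e.1.1 + e.1.2, by obtain ⟨h, -⟩ := e.2; omega⟩
  left_inv n := Fin.ext (by dsimp only; omega)
  right_inv := by
    rintro ⟨⟨i, j⟩, h, hij⟩
    apply Subtype.ext
    dsimp only
    ext <;> omega

theorem stmt1_general (k : ℕ) :
    ∃ (V : Type) (G : SimpleGraph V) (a b : V), a ≠ b ∧
      Nonempty (pathGraph (k + 1) ≃g SPG G a b) := by
  have h₀ : zigzag k 0 0 := ⟨Nat.zero_le k, .inl rfl⟩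
  refine ⟨_, ThreeLayer.graph (zigzag k), .src, .tgt, nofun,
    ⟨(zigzagEdgeEquiv k).trans (.ofBijective _ (ThreeLayer.toGeodesic_bijective h₀)), ?_⟩⟩
  intro n m
  simp only [Equiv.trans_apply, Equiv.ofBijective_apply, ThreeLayer.spg_adj_toGeodesic_iff,
    pathGraph_adj, zigzagEdgeEquiv, Equiv.coe_fn_mk]
  omega

theorem stmt1 (k : ℕ) (hk : 1 ≤ k) :
    ∃ (V : Type) (G : SimpleGraph V) (a b : V), a ≠ b ∧
      Nonempty (pathGraph (k + 1) ≃g SPG G a b) :=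
  stmt1_general k
end

section
/- For a graph G with distinct vertices a,b, S(G,a,b) is a complete graph if and only if every pair of a,b-geodesics in G differs at exactly one common index i (i.e., all pairs of geodesics differ at the same single position). -/
open SimpleGraph

/-!
If sequences `f, g` differ only at `i` and `f, h` differ only at `j ≠ i`, then `g` and `h`
differ at both `i` and `j`. Hence, in a family of sequences any two of which differ in exactly
one position, all sequences differ from a fixed one `u` at the same index `i`, and then any two
of them agree off `i`.
-/

section DiffersOnlyAt

variable {ι β : Type*}

def DiffersOnlyAt (f g : ι → β) (i : ι) : Prop :=
  f i ≠ g i ∧ ∀ j, j ≠ i → f j = g j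

variable {f g h : ι → β} {i j : ι}

theorem DiffersOnlyAt.symm (hfg : DiffersOnlyAt f g i) : DiffersOnlyAt g f i :=
  ⟨hfg.1.symm, fun j hj => (hfg.2 j hj).symm⟩

theorem DiffersOnlyAt.eq_of_ne (hfg : DiffersOnlyAt f g i) (hj : f j ≠ g j) : j = i := by
  by_contra hji
  exact hj (hfg.2 j hji)

theorem DiffersOnlyAt.unique (hi : DiffersOnlyAt f g i) (hj : DiffersOnlyAt f g j) : i = j :=
  hj.eq_of_ne hi.1

theorem DiffersOnlyAt.index_eq_of_differsOnlyAt (hg : DiffersOnlyAt f g i)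
    (hh : DiffersOnlyAt f h j) {k : ι} (hgh : DiffersOnlyAt g h k) : i = j := by
  by_contra hij
  have hi : g i ≠ h i := fun he => hg.1 (by rw [he, hh.2 i hij])
  have hj : g j ≠ h j := fun he => hh.1 (by rw [← he, hg.2 j (Ne.symm hij)])
  exact hij ((hgh.eq_of_ne hi).trans (hgh.eq_of_ne hj).symm)

theorem DiffersOnlyAt.of_differsOnlyAt_left (hg : DiffersOnlyAt f g i)
    (hh : DiffersOnlyAt f h i) {k : ι} (hgh : DiffersOnlyAt g h k) : DiffersOnlyAt g h i := by
  have hoff : ∀ j, j ≠ i → g j = h j := fun j hj => (hg.2 j hj).symm.trans (hh.2 j hj)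
  obtain rfl : k = i := by
    by_contra hki
    exact hgh.1 (hoff k hki)
  exact hgh

theorem exists_forall_differsOnlyAt_of_pairwise {α : Type*} [Nonempty ι] (s : α → ι → β)
    (hs : Pairwise fun x y => ∃ k, DiffersOnlyAt (s x) (s y) k) :
    ∃ i, Pairwise fun x y => DiffersOnlyAt (s x) (s y) i := by
  by_cases hα : ∃ u w : α, u ≠ w
  swap
  · push Not at hα
    exact ⟨Classical.arbitrary ι, fun x y hxy => absurd (hα x y) hxy⟩
  obtain ⟨u, w, huw⟩ := hα
  obtain ⟨i, hi⟩ := hs huw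
  have from_u : ∀ x, x ≠ u → DiffersOnlyAt (s u) (s x) i := by
    intro x hxu
    obtain ⟨j, hj⟩ := hs hxu.symm
    obtain rfl : i = j := by
      by_cases hxw : x = w
      · subst hxw
        exact hi.unique hj
      · obtain ⟨k, hk⟩ := hs (Ne.symm hxw)
        exact hi.index_eq_of_differsOnlyAt hj hk
    exact hj
  refine ⟨i, fun x y hxy => ?_⟩
  obtain ⟨k, hk⟩ := hs hxy
  by_cases hxu : x = u
  · subst hxu
    exact from_u y (Ne.symm hxy)
  by_cases hyu : y = u
  · subst hyu
    exact (from_u x hxu).symm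
  exact (from_u x hxu).of_differsOnlyAt_left (from_u y hyu) hk

end DiffersOnlyAt

theorem stmt3_general {V : Type*} (G : SimpleGraph V) (a b : V) :
    (∀ U W : Geodesic G a b, U ≠ W → (SPG G a b).Adj U W) ↔
      (∃ i : ℕ, ∀ U W : Geodesic G a b, U ≠ W → DiffAt U W i) :=
  ⟨fun h => exists_forall_differsOnlyAt_of_pairwise
      (fun (U : Geodesic G a b) j => U.1.support.getD j a) h,
    fun ⟨i, hi⟩ U W hUW => ⟨i, hi U W hUW⟩⟩

theorem stmt3 {V : Type*} (G : SimpleGraph V) (a b : V) (hab : a ≠ b) :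
    (∀ U W : Geodesic G a b, U ≠ W → (SPG G a b).Adj U W) ↔
      (∃ i : ℕ, ∀ U W : Geodesic G a b, U ≠ W → DiffAt U W i) :=
  stmt3_general G a b
end

section
/- Let G be connected with a,b ∈ V(G), d(a,b) ≥ 2, and let v be a vertex lying on at least one a,b-geodesic. Then the subgraph of S(G,a,b) induced by the vertices corresponding to a,b-geodesics containing v is isomorphic to the Cartesian product S(G,a,v) □ S(G,v,b). -/
open SimpleGraph

/-!
A geodesic through `v` splits at `v` into an `a,v`-geodesic and a `v,b`-geodesic, because
`d(a,v) + d(v,b) = d(a,b)`; concatenation inverts the splitting. The vertex sequence of a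
concatenation is that of the first part followed by the tail of the second, and all first parts
have the same length `d(a,v) + 1`. So two concatenations differ in exactly one position iff one
pair of parts differs in exactly one position and the other pair coincides, which is adjacency
in the Cartesian product.
-/

namespace List

variable {α : Type*}

def DiffInOne (l m : List α) : Prop :=
  ∃ i : ℕ, l[i]? ≠ m[i]? ∧ ∀ j : ℕ, j ≠ i → l[j]? = m[j]?

theorem getD_eq_getD_iff_of_length_eq {l m : List α} (h : l.length = m.length) (i : ℕ) (d : α) :
    l.getD i d = m.getD i d ↔ l[i]? = m[i]? := by
  rw [getD_eq_getElem?_getD, getD_eq_getElem?_getD]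
  by_cases hi : i < l.length
  · simp [getElem?_eq_getElem hi, getElem?_eq_getElem (h ▸ hi)]
  · simp [getElem?_eq_none (Nat.le_of_not_lt hi), getElem?_eq_none (h ▸ Nat.le_of_not_lt hi)]

theorem diffInOne_cons_cons_iff {x : α} {l m : List α} :
    DiffInOne (x :: l) (x :: m) ↔ DiffInOne l m := by
  constructor
  · rintro ⟨_ | i, hi, hj⟩
    · exact absurd rfl hi
    · exact ⟨i, hi, fun j hji => hj (j + 1) (by omega)⟩
  · rintro ⟨i, hi, hj⟩
    refine ⟨i + 1, hi, ?_⟩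
    rintro (_ | j) hji
    · rfl
    · exact hj j (by omega)

theorem diffInOne_append_append_iff {l₁ l₂ m₁ m₂ : List α} (hl : l₁.length = l₂.length) :
    DiffInOne (l₁ ++ m₁) (l₂ ++ m₂) ↔
      DiffInOne l₁ l₂ ∧ m₁ = m₂ ∨ DiffInOne m₁ m₂ ∧ l₁ = l₂ := by
  have hout : ∀ j, l₁.length ≤ j → l₁[j]? = l₂[j]? := fun j hj => by
    rw [getElem?_eq_none hj, getElem?_eq_none (hl ▸ hj)]
  simp only [DiffInOne, getElem?_append, ← hl]
  constructor
  · rintro ⟨i, hi, hj⟩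
    by_cases hin : i < l₁.length
    · refine Or.inl ⟨⟨i, by simpa [hin] using hi, fun j hji => ?_⟩, ext_getElem? fun j => ?_⟩
      · by_cases hjn : j < l₁.length
        · simpa [hjn] using hj j hji
        · exact hout j (by omega)
      · simpa using hj (l₁.length + j) (by omega)
    · refine Or.inr ⟨⟨i - l₁.length, by simpa [hin] using hi, fun j hji => ?_⟩,
        ext_getElem? fun j => ?_⟩
      · simpa using hj (l₁.length + j) (by omega)
      · by_cases hjn : j < l₁.length
        · simpa [hjn] using hj j (by omega)
        · exact hout j (by omega)
  · rintro (⟨⟨i, hi, hj⟩, rfl⟩ | ⟨⟨i, hi, hj⟩, rfl⟩)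
    · have hin : i < l₁.length := by
        by_contra h
        exact hi (hout i (by omega))
      refine ⟨i, by simpa [hin] using hi, fun j hji => ?_⟩
      split_ifs
      · exact hj j hji
      · rfl
    · refine ⟨l₁.length + i, by simpa using hi, fun j hji => ?_⟩
      split_ifs
      · rfl
      · exact hj _ (by omega)

end List

namespace SimpleGraph.Walk

variable {V : Type*} {G : SimpleGraph V} {u v w : V}

theorem support_tail_injective : Function.Injective (fun q : G.Walk v w => q.support.tail) :=
  fun q₁ q₂ h => ext_support <| by
    rw [← cons_tail_support q₁, ← cons_tail_support q₂]
    exact congrArg _ h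

theorem diffInOne_support_iff {q₁ q₂ : G.Walk v w} :
    q₁.support.DiffInOne q₂.support ↔ q₁.support.tail.DiffInOne q₂.support.tail := by
  simpa only [cons_tail_support] using
    (List.diffInOne_cons_cons_iff (x := v) (l := q₁.support.tail) (m := q₂.support.tail))

theorem append_inj_of_length_eq {p₁ p₂ : G.Walk u v} {q₁ q₂ : G.Walk v w}
    (hl : p₁.length = p₂.length) (h : p₁.append q₁ = p₂.append q₂) : p₁ = p₂ ∧ q₁ = q₂ := by
  have hs := congrArg support h
  rw [support_append, support_append] at hs
  obtain ⟨hp, hq⟩ := List.append_inj hs (by simp [hl])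
  exact ⟨ext_support hp, support_tail_injective hq⟩

end SimpleGraph.Walk

namespace Geodesic

variable {V : Type*} {G : SimpleGraph V} {a b v : V}

theorem length_support (U : Geodesic G a b) : U.1.support.length = G.dist a b + 1 := by
  rw [Walk.length_support, U.2.2]

theorem support_injective : Function.Injective (fun U : Geodesic G a b => U.1.support) :=
  fun _ _ h => Subtype.ext (Walk.ext_support h)

theorem spg_adj_iff {U W : Geodesic G a b} :
    (SPG G a b).Adj U W ↔ U.1.support.DiffInOne W.1.support := by
  have hl : U.1.support.length = W.1.support.length := by rw [length_support, length_support]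
  simp only [SPG, DiffAt, List.DiffInOne, ne_eq, List.getD_eq_getD_iff_of_length_eq hl]

def append (P : Geodesic G a v) (Q : Geodesic G v b)
    (h : G.dist a v + G.dist v b = G.dist a b) : Geodesic G a b :=
  have hl : (P.1.append Q.1).length = G.dist a b := by rw [Walk.length_append, P.2.2, Q.2.2, h]
  ⟨P.1.append Q.1, Walk.isPath_of_length_eq_dist _ hl, hl⟩

theorem mem_support_append (P : Geodesic G a v) (Q : Geodesic G v b)
    (h : G.dist a v + G.dist v b = G.dist a b) : v ∈ (P.append Q h).1.support :=
  (Walk.mem_support_append_iff _ _).2 (Or.inl P.1.end_mem_support)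

theorem spg_adj_append_iff (h : G.dist a v + G.dist v b = G.dist a b)
    {P₁ P₂ : Geodesic G a v} {Q₁ Q₂ : Geodesic G v b} :
    (SPG G a b).Adj (P₁.append Q₁ h) (P₂.append Q₂ h) ↔
      (SPG G a v □ SPG G v b).Adj (P₁, Q₁) (P₂, Q₂) := by
  have hP : P₁ = P₂ ↔ P₁.1.support = P₂.1.support := support_injective.eq_iff.symm
  have hQ : Q₁ = Q₂ ↔ Q₁.1.support.tail = Q₂.1.support.tail :=
    Subtype.ext_iff.trans Walk.support_tail_injective.eq_iff.symm
  rw [spg_adj_iff, boxProd_adj, spg_adj_iff, spg_adj_iff,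
    Walk.diffInOne_support_iff (q₁ := Q₁.1), hP, hQ]
  simp only [append, Walk.support_append]
  exact List.diffInOne_append_append_iff (P₁.length_support.trans P₂.length_support.symm)

theorem dist_add_dist_of_mem_support (U : Geodesic G a b) (hv : v ∈ U.1.support) :
    G.dist a v + G.dist v b = G.dist a b := by
  classical
  have htake := dist_le (U.1.takeUntil v hv)
  have hdrop := dist_le (U.1.dropUntil v hv)
  have hsplit := congrArg Walk.length (U.1.take_spec hv)
  have htri := (U.1.dropUntil v hv).reachable.dist_triangle_right a
  rw [Walk.length_append, U.2.2] at hsplit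
  omega

variable [DecidableEq V]

theorem length_takeUntil (U : Geodesic G a b) (hv : v ∈ U.1.support) :
    (U.1.takeUntil v hv).length = G.dist a v := by
  have hsplit := congrArg Walk.length (U.1.take_spec hv)
  rw [Walk.length_append] at hsplit
  have hlen := U.2.2
  have hdist := U.dist_add_dist_of_mem_support hv
  have htake := dist_le (U.1.takeUntil v hv)
  have hdrop := dist_le (U.1.dropUntil v hv)
  omega

theorem length_dropUntil (U : Geodesic G a b) (hv : v ∈ U.1.support) :
    (U.1.dropUntil v hv).length = G.dist v b := by
  have hsplit := congrArg Walk.length (U.1.take_spec hv)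
  rw [Walk.length_append, U.length_takeUntil hv] at hsplit
  have hlen := U.2.2
  have hdist := U.dist_add_dist_of_mem_support hv
  omega

def takeUntil (U : Geodesic G a b) (hv : v ∈ U.1.support) : Geodesic G a v :=
  ⟨U.1.takeUntil v hv, U.2.1.takeUntil hv, U.length_takeUntil hv⟩

def dropUntil (U : Geodesic G a b) (hv : v ∈ U.1.support) : Geodesic G v b :=
  ⟨U.1.dropUntil v hv, U.2.1.dropUntil hv, U.length_dropUntil hv⟩

def appendEquiv (h : G.dist a v + G.dist v b = G.dist a b) :
    Geodesic G a v × Geodesic G v b ≃ {U : Geodesic G a b | v ∈ U.1.support} where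
  toFun PQ := ⟨PQ.1.append PQ.2 h, mem_support_append PQ.1 PQ.2 h⟩
  invFun U := (U.1.takeUntil U.2, U.1.dropUntil U.2)
  left_inv := by
    rintro ⟨P, Q⟩
    have hv := mem_support_append P Q h
    obtain ⟨hP, hQ⟩ := Walk.append_inj_of_length_eq
      ((P.append Q h).length_takeUntil hv |>.trans P.2.2.symm)
      ((P.append Q h).1.take_spec hv : _ = P.1.append Q.1)
    exact Prod.ext (Subtype.ext hP) (Subtype.ext hQ)
  right_inv U := Subtype.ext (Subtype.ext (U.1.1.take_spec U.2))

def boxProdIsoInduce (h : G.dist a v + G.dist v b = G.dist a b) :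
    (SPG G a v □ SPG G v b) ≃g (SPG G a b).induce {U : Geodesic G a b | v ∈ U.1.support} where
  toEquiv := appendEquiv h
  map_rel_iff' := spg_adj_append_iff h

end Geodesic

theorem stmt6_general {V : Type*} (G : SimpleGraph V) (a b v : V)
    (hv : ∃ U : Geodesic G a b, v ∈ U.1.support) :
    Nonempty (((SPG G a b).induce {U : Geodesic G a b | v ∈ U.1.support}) ≃g
      (SPG G a v □ SPG G v b)) := by
  classical
  obtain ⟨U, hU⟩ := hv
  exact ⟨(Geodesic.boxProdIsoInduce (U.dist_add_dist_of_mem_support hU)).symm⟩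

theorem stmt6 {V : Type*} (G : SimpleGraph V) (a b v : V) (hconn : G.Connected)
    (hd : 2 ≤ G.dist a b) (hv : ∃ U : Geodesic G a b, v ∈ U.1.support) :
    Nonempty (((SPG G a b).induce {U : Geodesic G a b | v ∈ U.1.support}) ≃g
      (SPG G a v □ SPG G v b)) :=
  stmt6_general G a b v hv
end

section
/- If H_1 and H_2 are shortest path graphs, then the Cartesian product H_1 □ H_2 is a shortest path graph. -/
open SimpleGraph

/-! Glue `G₁` and `G₂` by identifying `b₁` with `a₂`. Every geodesic from `a₁` to `b₂` in the glued
graph must pass through the junction, so it is the concatenation of an `a₁,b₁`-geodesic and an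
`a₂,b₂`-geodesic, and conversely. Since the junction sits at the fixed position `d(a₁,b₁)`, two
concatenations differ in exactly one position iff one of the factors agrees and the other differs
in exactly one position: this is adjacency in `S(G₁,a₁,b₁) □ S(G₂,a₂,b₂)`. -/

theorem List.getD_eq_getD_iff_of_length_eq_s8 {X : Type*} {l₁ l₂ : List X}
    (hl : l₁.length = l₂.length) (n : ℕ) (d d' : X) :
    l₁.getD n d = l₂.getD n d ↔ l₁.getD n d' = l₂.getD n d' := by
  by_cases hn : n < l₁.length
  · rw [List.getD_eq_getElem _ _ hn, List.getD_eq_getElem _ _ (hl ▸ hn),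
      List.getD_eq_getElem _ _ hn, List.getD_eq_getElem _ _ (hl ▸ hn)]
  · rw [List.getD_eq_default _ _ (by omega), List.getD_eq_default _ _ (by omega),
      List.getD_eq_default _ _ (by omega), List.getD_eq_default _ _ (by omega)]
    simp only

def DifferInOnePlace {X : Type*} (f g : ℕ → X) : Prop :=
  ∃ i, f i ≠ g i ∧ ∀ j, j ≠ i → f j = g j

section SeqJoin

variable {X Y : Type*} (n : ℕ) (x₀ : X) (y₀ : Y)

def seqJoin (f : ℕ → X) (g : ℕ → Y) (i : ℕ) : X × Y :=
  if i < n then (f i, y₀) else (x₀, g (i - n))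

variable {n x₀ y₀} {f f' : ℕ → X} {g g' : ℕ → Y}

theorem seqJoin_apply_eq_iff (i : ℕ) :
    seqJoin n x₀ y₀ f g i = seqJoin n x₀ y₀ f' g' i ↔
      if i < n then f i = f' i else g (i - n) = g' (i - n) := by
  unfold seqJoin
  split_ifs <;> simp

theorem seqJoin_injective (hf : ∀ i, n ≤ i → f i = f' i)
    (h : seqJoin n x₀ y₀ f g = seqJoin n x₀ y₀ f' g') : f = f' ∧ g = g' := by
  have h' := fun i => (seqJoin_apply_eq_iff i).mp (congrFun h i)
  refine ⟨funext fun i => ?_, funext fun j => ?_⟩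
  · by_cases hi : i < n
    · simpa [hi] using h' i
    · exact hf i (by omega)
  · simpa using h' (n + j)

theorem differInOnePlace_seqJoin_iff (hf : ∀ i, n ≤ i → f i = f' i) (hg : g 0 = g' 0) :
    DifferInOnePlace (seqJoin n x₀ y₀ f g) (seqJoin n x₀ y₀ f' g') ↔
      (DifferInOnePlace f f' ∧ g = g') ∨ (DifferInOnePlace g g' ∧ f = f') := by
  simp only [DifferInOnePlace, ne_eq, seqJoin_apply_eq_iff]
  constructor
  · rintro ⟨i, hne, heq⟩
    by_cases hi : i < n
    · refine Or.inl ⟨⟨i, by simpa [hi] using hne, fun j hj => ?_⟩, funext fun k => ?_⟩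
      · by_cases hj' : j < n
        · simpa [hj'] using heq j hj
        · exact hf j (by omega)
      · simpa using heq (n + k) (by omega)
    · refine Or.inr ⟨⟨i - n, by simpa [hi] using hne, fun k hk => ?_⟩, funext fun j => ?_⟩
      · simpa using heq (n + k) (by omega)
      · by_cases hj : j < n
        · simpa [hj] using heq j (by omega)
        · exact hf j (by omega)
  · rintro (⟨⟨i, hne, heq⟩, rfl⟩ | ⟨⟨k, hne, heq⟩, rfl⟩)
    · have hi : i < n := by
        by_contra hi
        exact hne (hf i (by omega))
      refine ⟨i, by simpa [hi] using hne, fun j hj => ?_⟩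
      split_ifs
      · exact heq j hj
      · rfl
    · have hk : k ≠ 0 := by
        rintro rfl
        exact hne hg
      refine ⟨n + k, by simpa using hne, fun j hj => ?_⟩
      split_ifs
      · rfl
      · exact heq _ (by omega)

end SeqJoin

namespace Geodesic

variable {V : Type*} {G : SimpleGraph V} {a b : V}

theorem eq_iff_getVert_eq {U W : Geodesic G a b} : U = W ↔ U.1.getVert = W.1.getVert :=
  ⟨fun h => h ▸ rfl, fun h => Subtype.ext (Walk.ext_getVert (congrFun h))⟩

theorem spg_adj_iff_differInOnePlace {U W : Geodesic G a b} :
    (SPG G a b).Adj U W ↔ DifferInOnePlace U.1.getVert W.1.getVert := by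
  have hlen : U.1.support.length = W.1.support.length := by
    simp only [Walk.length_support, U.2.2, W.2.2]
  have key : ∀ j, U.1.support.getD j a = W.1.support.getD j a ↔ U.1.getVert j = W.1.getVert j := by
    intro j
    rw [Walk.getVert_eq_getD_support, Walk.getVert_eq_getD_support]
    exact List.getD_eq_getD_iff_of_length_eq_s8 hlen j a b
  simp only [SPG, DiffAt, DifferInOnePlace, ne_eq, key]

theorem getVert_eq_of_dist_le {U U' : Geodesic G a b} (i : ℕ) (hi : G.dist a b ≤ i) :
    U.1.getVert i = U'.1.getVert i := by
  rw [U.1.getVert_of_length_le (U.2.2.le.trans hi), U'.1.getVert_of_length_le (U'.2.2.le.trans hi)]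

end Geodesic

def SimpleGraph.Iso.boxProdCongr {α β γ δ : Type*} {A : SimpleGraph α} {B : SimpleGraph β}
    {C : SimpleGraph γ} {D : SimpleGraph δ} (e₁ : A ≃g C) (e₂ : B ≃g D) : (A □ B) ≃g (C □ D) where
  toEquiv := e₁.toEquiv.prodCongr e₂.toEquiv
  map_rel_iff' := by simp [boxProd_adj, Iso.map_adj_iff]

section Wedge

variable {V₁ V₂ : Type*} (G₁ : SimpleGraph V₁) (G₂ : SimpleGraph V₂) (b₁ : V₁) (a₂ : V₂)

/-- `G₁` and `G₂` glued by identifying `b₁` with `a₂`, realised on the vertices `(x, a₂)` and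
`(b₁, y)` of `V₁ × V₂`; all other vertices are isolated. -/
def wedge : SimpleGraph (V₁ × V₂) where
  Adj u w := (u.2 = a₂ ∧ w.2 = a₂ ∧ G₁.Adj u.1 w.1) ∨ (u.1 = b₁ ∧ w.1 = b₁ ∧ G₂.Adj u.2 w.2)
  symm := by
    constructor
    rintro u w (⟨hu, hw, h⟩ | ⟨hu, hw, h⟩)
    exacts [Or.inl ⟨hw, hu, h.symm⟩, Or.inr ⟨hw, hu, h.symm⟩]
  loopless := by constructor; rintro u (⟨-, -, h⟩ | ⟨-, -, h⟩) <;> exact h.ne rfl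

-- `abbrev`, so that `simp` sees the endpoints of mapped walks as the pairs `(x, a₂)`, `(b₁, y)`
abbrev wedgeLeft : G₁ →g wedge G₁ G₂ b₁ a₂ where
  toFun x := (x, a₂)
  map_rel' h := Or.inl ⟨rfl, rfl, h⟩

abbrev wedgeRight : G₂ →g wedge G₁ G₂ b₁ a₂ where
  toFun y := (b₁, y)
  map_rel' h := Or.inr ⟨rfl, rfl, h⟩

theorem wedge_le_boxProd : wedge G₁ G₂ b₁ a₂ ≤ G₁ □ G₂ := by
  rintro u w (⟨hu, hw, h⟩ | ⟨hu, hw, h⟩)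
  · exact Or.inl ⟨h, hu.trans hw.symm⟩
  · exact Or.inr ⟨h, hu.trans hw.symm⟩

variable {G₁ G₂ b₁ a₂}

theorem dist_add_dist_le_wedge_length {u v : V₁ × V₂} (P : (wedge G₁ G₂ b₁ a₂).Walk u v) :
    G₁.dist u.1 v.1 + G₂.dist u.2 v.2 ≤ P.length := by
  classical
  let w := P.mapLe (wedge_le_boxProd G₁ G₂ b₁ a₂)
  calc G₁.dist u.1 v.1 + G₂.dist u.2 v.2
      ≤ w.ofBoxProdLeft.length + w.ofBoxProdRight.length :=
        add_le_add (dist_le _) (dist_le _)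
    _ = P.length := by rw [← Walk.length_boxProd, Walk.length_mapLe]

theorem reachable_of_wedge_reachable {u v : V₁ × V₂} (h : (wedge G₁ G₂ b₁ a₂).Reachable u v) :
    G₁.Reachable u.1 v.1 ∧ G₂.Reachable u.2 v.2 :=
  reachable_boxProd.mp (h.mono (wedge_le_boxProd G₁ G₂ b₁ a₂))

variable {a₁ : V₁} {b₂ : V₂}

def joinWalk (p : G₁.Walk a₁ b₁) (q : G₂.Walk a₂ b₂) :
    (wedge G₁ G₂ b₁ a₂).Walk (a₁, a₂) (b₁, b₂) :=
  (p.map (wedgeLeft G₁ G₂ b₁ a₂)).append (q.map (wedgeRight G₁ G₂ b₁ a₂))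

theorem joinWalk_length (p : G₁.Walk a₁ b₁) (q : G₂.Walk a₂ b₂) :
    (joinWalk p q).length = p.length + q.length := by
  simp [joinWalk]

theorem joinWalk_getVert (p : G₁.Walk a₁ b₁) (q : G₂.Walk a₂ b₂) :
    (joinWalk p q).getVert = seqJoin p.length b₁ a₂ p.getVert q.getVert := by
  funext i
  simp only [joinWalk, Walk.getVert_append, Walk.getVert_map, Walk.length_map, seqJoin]
  rfl

theorem wedge_dist (h₁ : G₁.Reachable a₁ b₁) (h₂ : G₂.Reachable a₂ b₂) :
    (wedge G₁ G₂ b₁ a₂).dist (a₁, a₂) (b₁, b₂) = G₁.dist a₁ b₁ + G₂.dist a₂ b₂ := by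
  obtain ⟨p, hp⟩ := h₁.exists_walk_length_eq_dist
  obtain ⟨q, hq⟩ := h₂.exists_walk_length_eq_dist
  obtain ⟨P, hP⟩ := (joinWalk p q).reachable.exists_walk_length_eq_dist
  refine le_antisymm ?_ (hP ▸ dist_add_dist_le_wedge_length P)
  calc _ ≤ (joinWalk p q).length := dist_le _
    _ = _ := by rw [joinWalk_length, hp, hq]

theorem exists_eq_map_wedgeRight {y : V₂} (P : (wedge G₁ G₂ b₁ a₂).Walk (b₁, y) (b₁, b₂))
    (hP : P.length = G₂.dist y b₂) : ∃ q : G₂.Walk y b₂, P = q.map (wedgeRight G₁ G₂ b₁ a₂) := by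
  obtain ⟨n, hn⟩ : ∃ n, P.length = n := ⟨_, rfl⟩
  induction n generalizing y with
  | zero =>
    cases P with
    | nil => exact ⟨Walk.nil, rfl⟩
    | cons => simp at hn
  | succ n ih =>
    cases P with
    | nil => simp at hn
    | @cons _ w _ h P' =>
      obtain ⟨w₁, w₂⟩ := w
      have hbound := dist_add_dist_le_wedge_length P'
      simp only [Walk.length_cons] at hP hn
      rcases h with ⟨hy, hw, h⟩ | ⟨-, hw, h⟩
      · -- a step into `G₁` leaves the junction, after which the walk is too long to come back
        dsimp only at hy hw h hbound
        have : G₁.dist w₁ b₁ = 1 := dist_eq_one_iff_adj.mpr h.symm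
        have : G₂.dist w₂ b₂ = G₂.dist y b₂ := by rw [hw, hy]
        omega
      · dsimp only at hw h hbound
        subst w₁
        have := h.reachable.dist_triangle_left b₂
        rw [dist_eq_one_iff_adj.mpr h] at this
        simp only [SimpleGraph.dist_self, zero_add] at hbound
        obtain ⟨q, rfl⟩ := ih P' (by omega) (by omega)
        exact ⟨Walk.cons h q, rfl⟩

theorem exists_eq_joinWalk {x : V₁} (P : (wedge G₁ G₂ b₁ a₂).Walk (x, a₂) (b₁, b₂))
    (hP : P.length = G₁.dist x b₁ + G₂.dist a₂ b₂) :
    ∃ (p : G₁.Walk x b₁) (q : G₂.Walk a₂ b₂), P = joinWalk p q := by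
  have from_junction (P : (wedge G₁ G₂ b₁ a₂).Walk (b₁, a₂) (b₁, b₂))
      (hP : P.length = G₁.dist b₁ b₁ + G₂.dist a₂ b₂) :
      ∃ (p : G₁.Walk b₁ b₁) (q : G₂.Walk a₂ b₂), P = joinWalk p q := by
    rw [SimpleGraph.dist_self, zero_add] at hP
    obtain ⟨q, rfl⟩ := exists_eq_map_wedgeRight P hP
    exact ⟨Walk.nil, q, rfl⟩
  obtain ⟨n, hn⟩ : ∃ n, P.length = n := ⟨_, rfl⟩
  induction n generalizing x with
  | zero =>
    obtain rfl : x = b₁ := by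
      cases P with
      | nil => rfl
      | cons => simp at hn
    exact from_junction P hP
  | succ n ih =>
    by_cases hx : x = b₁
    · subst hx
      exact from_junction P hP
    cases P with
    | nil => exact absurd rfl hx
    | @cons _ w _ h P' =>
      obtain ⟨w₁, w₂⟩ := w
      have hbound := dist_add_dist_le_wedge_length P'
      simp only [Walk.length_cons] at hP hn
      rcases h with ⟨-, hw, h⟩ | ⟨hx', -, -⟩
      · dsimp only at hw h hbound
        subst hw
        have := h.reachable.dist_triangle_left b₁
        rw [dist_eq_one_iff_adj.mpr h] at this
        obtain ⟨p, q, rfl⟩ := ih P' (by omega) (by omega)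
        exact ⟨Walk.cons h p, q, rfl⟩
      · exact absurd hx' hx

end Wedge

section JoinGeodesic

variable {V₁ V₂ : Type*} {G₁ : SimpleGraph V₁} {G₂ : SimpleGraph V₂} {a₁ b₁ : V₁} {a₂ b₂ : V₂}

def joinGeodesic (pq : Geodesic G₁ a₁ b₁ × Geodesic G₂ a₂ b₂) :
    Geodesic (wedge G₁ G₂ b₁ a₂) (a₁, a₂) (b₁, b₂) :=
  have h : (joinWalk pq.1.1 pq.2.1).length = (wedge G₁ G₂ b₁ a₂).dist (a₁, a₂) (b₁, b₂) := by
    rw [joinWalk_length, pq.1.2.2, pq.2.2.2, wedge_dist pq.1.1.reachable pq.2.1.reachable]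
  ⟨joinWalk pq.1.1 pq.2.1, Walk.isPath_of_length_eq_dist _ h, h⟩

theorem joinGeodesic_getVert (pq : Geodesic G₁ a₁ b₁ × Geodesic G₂ a₂ b₂) :
    (joinGeodesic pq).1.getVert = seqJoin (G₁.dist a₁ b₁) b₁ a₂ pq.1.1.getVert pq.2.1.getVert := by
  show (joinWalk pq.1.1 pq.2.1).getVert = _
  rw [joinWalk_getVert, pq.1.2.2]

theorem joinGeodesic_injective : Function.Injective (@joinGeodesic _ _ G₁ G₂ a₁ b₁ a₂ b₂) := by
  intro pq pq' h
  rw [Geodesic.eq_iff_getVert_eq, joinGeodesic_getVert, joinGeodesic_getVert] at h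
  obtain ⟨h₁, h₂⟩ := seqJoin_injective Geodesic.getVert_eq_of_dist_le h
  exact Prod.ext (Geodesic.eq_iff_getVert_eq.mpr h₁) (Geodesic.eq_iff_getVert_eq.mpr h₂)

theorem joinGeodesic_surjective : Function.Surjective (@joinGeodesic _ _ G₁ G₂ a₁ b₁ a₂ b₂) := by
  rintro ⟨P, -, hP⟩
  obtain ⟨h₁, h₂⟩ := reachable_of_wedge_reachable P.reachable
  dsimp only at h₁ h₂
  rw [wedge_dist h₁ h₂] at hP
  obtain ⟨p, q, rfl⟩ := exists_eq_joinWalk P hP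
  have hsum := joinWalk_length p q
  have hp := dist_le p
  have hq := dist_le q
  have hp' : p.length = G₁.dist a₁ b₁ := by omega
  have hq' : q.length = G₂.dist a₂ b₂ := by omega
  exact ⟨(⟨p, p.isPath_of_length_eq_dist hp', hp'⟩, ⟨q, q.isPath_of_length_eq_dist hq', hq'⟩), rfl⟩

theorem joinGeodesic_adj_iff (pq pq' : Geodesic G₁ a₁ b₁ × Geodesic G₂ a₂ b₂) :
    (SPG (wedge G₁ G₂ b₁ a₂) (a₁, a₂) (b₁, b₂)).Adj (joinGeodesic pq) (joinGeodesic pq') ↔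
      (SPG G₁ a₁ b₁ □ SPG G₂ a₂ b₂).Adj pq pq' := by
  rw [Geodesic.spg_adj_iff_differInOnePlace, joinGeodesic_getVert, joinGeodesic_getVert,
    differInOnePlace_seqJoin_iff Geodesic.getVert_eq_of_dist_le (by simp only [Walk.getVert_zero]),
    boxProd_adj, Geodesic.spg_adj_iff_differInOnePlace, Geodesic.spg_adj_iff_differInOnePlace,
    Geodesic.eq_iff_getVert_eq, Geodesic.eq_iff_getVert_eq]

noncomputable def spgBoxProdIsoSPGWedge :
    (SPG G₁ a₁ b₁ □ SPG G₂ a₂ b₂) ≃g SPG (wedge G₁ G₂ b₁ a₂) (a₁, a₂) (b₁, b₂) where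
  toEquiv := Equiv.ofBijective joinGeodesic ⟨joinGeodesic_injective, joinGeodesic_surjective⟩
  map_rel_iff' := joinGeodesic_adj_iff _ _

end JoinGeodesic

theorem stmt8 {α β : Type*} (H₁ : SimpleGraph α) (H₂ : SimpleGraph β)
    (h₁ : IsSPGraph H₁) (h₂ : IsSPGraph H₂) : IsSPGraph (H₁ □ H₂) := by
  obtain ⟨V₁, G₁, a₁, b₁, hab₁, ⟨e₁⟩⟩ := h₁
  obtain ⟨V₂, G₂, a₂, b₂, -, ⟨e₂⟩⟩ := h₂
  exact ⟨V₁ × V₂, wedge G₁ G₂ b₁ a₂, (a₁, a₂), (b₁, b₂), fun h => hab₁ (congrArg Prod.fst h),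
    ⟨(e₁.boxProdCongr e₂).trans spgBoxProdIsoSPGWedge⟩⟩
end

section
/- In any shortest path graph H = S(G,a,b), if U_1 U_2 U_3 is an induced path in H whose edges U_1U_2 and U_2U_3 have difference indices i and j respectively with j ∉ {i−1, i, i+1}, then H contains an induced 4-cycle containing the path U_1 U_2 U_3. -/
open SimpleGraph

/-!
Let `m` be the smaller of `i, j`. As `|i - j| ≥ 2`, the geodesics `U₁` and `U₃` agree at
index `m + 1`. Following one of them up to index `m + 1` and the other afterwards gives a walk
of length `d(a,b)`, hence a geodesic `U₄`; it differs from `U₃` exactly at `i`, from `U₁` exactly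
at `j`, and from `U₂` at both `i` and `j`, so `U₁U₂U₃U₄` is an induced 4-cycle.
-/

namespace SimpleGraph.Walk

variable {V : Type*} {G : SimpleGraph V} {u v : V}

lemma getD_support_eq_getVert (p : G.Walk u v) {n : ℕ} (h : n ≤ p.length) (d : V) :
    p.support.getD n d = p.getVert n := by
  rw [List.getD_eq_getElem?_getD, ← getVert_eq_support_getElem? p h, Option.getD_some]

lemma getD_support_append_take_drop {p q : G.Walk u v} {m : ℕ} (h : q.getVert m = p.getVert m)
    (hp : m ≤ p.length) (hq : m ≤ q.length) (k : ℕ) (d : V) :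
    ((p.take m).append ((q.drop m).copy h rfl)).support.getD k d =
      if k ≤ m then p.support.getD k d else q.support.getD k d := by
  rw [support_append, support_copy, support_take, drop_support_eq_support_drop_min,
    min_eq_left hq, List.tail_drop]
  have htake : (p.support.take (m + 1)).length = m + 1 := by
    rw [List.length_take, length_support]; omega
  simp only [List.getD_eq_getElem?_getD]
  split_ifs with hk
  · rw [List.getElem?_append_left (by omega), List.getElem?_take_of_lt (by omega)]
  · rw [List.getElem?_append_right (by omega), htake, List.getElem?_drop]
    congr 2
    omega

end SimpleGraph.Walk

section Geodesic

variable {V : Type*} {G : SimpleGraph V} {a b : V}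

lemma Geodesic.exists_splice (P Q : Geodesic G a b) {m : ℕ} (hm : m ≤ G.dist a b)
    (h : P.1.support.getD m a = Q.1.support.getD m a) :
    ∃ R : Geodesic G a b, ∀ k, R.1.support.getD k a =
      if k ≤ m then P.1.support.getD k a else Q.1.support.getD k a := by
  revert h
  obtain ⟨p, -, hp⟩ := P
  obtain ⟨q, -, hq⟩ := Q
  intro h
  rw [p.getD_support_eq_getVert (hp ▸ hm), q.getD_support_eq_getVert (hq ▸ hm)] at h
  set r := (p.take m).append ((q.drop m).copy h.symm rfl)
  have hr : r.length = G.dist a b := by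
    simp only [r, Walk.length_append, Walk.take_length, Walk.length_copy, Walk.drop_length, hp, hq]
    omega
  exact ⟨⟨r, r.isPath_of_length_eq_dist hr, hr⟩,
    fun k => Walk.getD_support_append_take_drop h.symm (hp ▸ hm) (hq ▸ hm) k a⟩

end Geodesic

namespace DiffAt

variable {V : Type*} {G : SimpleGraph V} {a b : V} {U W X : Geodesic G a b} {i j k : ℕ}

lemma symm (h : DiffAt U W i) : DiffAt W U i :=
  ⟨h.1.symm, fun k hk => (h.2 k hk).symm⟩

lemma ne (h : DiffAt U W i) : U ≠ W := by
  rintro rfl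
  exact h.1 rfl

lemma le_dist (h : DiffAt U W i) : i ≤ G.dist a b := by
  by_contra! hi
  have hlen (Y : Geodesic G a b) : Y.1.support.length ≤ i := by
    rw [Walk.length_support, Y.2.2]
    omega
  exact h.1 ((List.getD_eq_default _ _ (hlen U)).trans (List.getD_eq_default _ _ (hlen W)).symm)

lemma getD_eq_of_ne_of_ne (h₁ : DiffAt U W i) (h₂ : DiffAt W X j) (hi : k ≠ i) (hj : k ≠ j) :
    U.1.support.getD k a = X.1.support.getD k a :=
  (h₁.2 k hi).trans (h₂.2 k hj)

-- `U` and `X` agree at `i + 1`, so `R` can follow `U` up to there and `X` afterwards.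
lemma exists_swap (h₁ : DiffAt U W i) (h₂ : DiffAt W X j) (hij : i + 1 < j) :
    ∃ R, DiffAt U R j ∧ DiffAt R X i := by
  obtain ⟨R, hR⟩ := Geodesic.exists_splice U X (m := i + 1) (by linarith [h₂.le_dist])
    (h₁.getD_eq_of_ne_of_ne h₂ (by omega) (by omega))
  refine ⟨R, ⟨?_, fun k hk => ?_⟩, ⟨?_, fun k hk => ?_⟩⟩ <;> rw [hR]
  · rw [if_neg (by omega)]
    exact fun he => h₂.1 ((h₁.2 j (by omega)).symm.trans he)
  · split_ifs with hki
    · rfl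
    · exact h₁.getD_eq_of_ne_of_ne h₂ (by omega) hk
  · rw [if_pos (by omega)]
    exact fun he => h₁.1 (he.trans (h₂.2 i (by omega)).symm)
  · split_ifs with hki
    · exact h₁.getD_eq_of_ne_of_ne h₂ hk (by omega)
    · rfl

end DiffAt

lemma SPG.not_adj_of_getD_ne_of_getD_ne {V : Type*} {G : SimpleGraph V} {a b : V}
    {U W : Geodesic G a b} {i j : ℕ} (hi : U.1.support.getD i a ≠ W.1.support.getD i a)
    (hj : U.1.support.getD j a ≠ W.1.support.getD j a) (hij : i ≠ j) : ¬ (SPG G a b).Adj U W := by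
  rintro ⟨k, -, hk⟩
  obtain rfl | hki := eq_or_ne k i
  · exact hj (hk j hij.symm)
  · exact hi (hk i hki.symm)

theorem stmt11_general {V : Type*} (G : SimpleGraph V) (a b : V)
    (U₁ U₂ U₃ : Geodesic G a b) (i j : ℕ)
    (hd12 : DiffAt U₁ U₂ i) (hd23 : DiffAt U₂ U₃ j)
    (hj1 : j + 1 ≠ i) (hj2 : j ≠ i) (hj3 : j ≠ i + 1) :
    ∃ U₄ : Geodesic G a b, U₄ ≠ U₁ ∧ U₄ ≠ U₂ ∧ U₄ ≠ U₃ ∧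
      (SPG G a b).Adj U₃ U₄ ∧ (SPG G a b).Adj U₄ U₁ ∧ ¬ (SPG G a b).Adj U₂ U₄ := by
  obtain ⟨U₄, h34, h41⟩ : ∃ U₄, DiffAt U₃ U₄ i ∧ DiffAt U₄ U₁ j := by
    rcases lt_or_gt_of_ne hj2 with hji | hij
    · exact hd23.symm.exists_swap hd12.symm (by omega)
    · obtain ⟨R, h1R, hR3⟩ := hd12.exists_swap hd23 (by omega)
      exact ⟨R, hR3.symm, h1R.symm⟩
  have h24i : U₂.1.support.getD i a ≠ U₄.1.support.getD i a := by
    rw [h41.2 i hj2.symm]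
    exact hd12.1.symm
  have h24j : U₂.1.support.getD j a ≠ U₄.1.support.getD j a := by
    rw [← h34.2 j hj2]
    exact hd23.1
  exact ⟨U₄, h41.ne, fun h => h24j (by rw [h]), h34.ne.symm, ⟨i, h34⟩, ⟨j, h41⟩,
    SPG.not_adj_of_getD_ne_of_getD_ne h24i h24j hj2.symm⟩

theorem stmt11 {V : Type*} (G : SimpleGraph V) (a b : V)
    (U₁ U₂ U₃ : Geodesic G a b) (i j : ℕ)
    (h12 : (SPG G a b).Adj U₁ U₂) (h23 : (SPG G a b).Adj U₂ U₃)
    (h13 : ¬ (SPG G a b).Adj U₁ U₃) (hne : U₁ ≠ U₃)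
    (hd12 : DiffAt U₁ U₂ i) (hd23 : DiffAt U₂ U₃ j)
    (hj1 : j + 1 ≠ i) (hj2 : j ≠ i) (hj3 : j ≠ i + 1) :
    ∃ U₄ : Geodesic G a b, U₄ ≠ U₁ ∧ U₄ ≠ U₂ ∧ U₄ ≠ U₃ ∧
      (SPG G a b).Adj U₃ U₄ ∧ (SPG G a b).Adj U₄ U₁ ∧ ¬ (SPG G a b).Adj U₂ U₄ :=
  stmt11_general G a b U₁ U₂ U₃ i j hd12 hd23 hj1 hj2 hj3
end

section
/- The cycle C_k occurs as an induced subgraph of some shortest path graph if and only if k ≠ 5. -/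
/-!
Reading off vertex sequences embeds `S(G,a,b)` as an induced subgraph of the Hamming graph on
`ℕ → V`. Conversely, in the graph on `ℕ × α` whose consecutive layers are completely joined,
the `(0,·),(m+1,·)`-geodesics spell out the words `Fin m → α` on their inner layers, which
realises the Hamming graph on `Fin m → α` inside a shortest path graph. So the question is
which cycles are induced subgraphs of Hamming graphs.

An induced `C₅` is impossible: label each edge of the cycle by the coordinate it changes. Two
consecutive edges carry different labels, since otherwise the ends of the path they form would
be equal or adjacent; and no label is used only once, since a coordinate changed only once
around a closed walk cannot return to its value. Each label would then sit on exactly two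
non-consecutive edges, which is impossible as 5 is odd. For the other cycles, `C₃`, `C₄` and
`C₇` are found by hand, and an induced `C_k` with `k ≥ 4` is stretched to an induced `C_{k+2}`
by lifting a path `c₀c₁c₂` of it to a new value of one more coordinate.
-/

open SimpleGraph

def DiffOnlyAt {ι α : Type*} (f g : ι → α) (i : ι) : Prop :=
  f i ≠ g i ∧ ∀ j, j ≠ i → f j = g j

theorem DiffOnlyAt.symm {ι α : Type*} {f g : ι → α} {i : ι} (h : DiffOnlyAt f g i) :
    DiffOnlyAt g f i :=
  ⟨h.1.symm, fun j hj => (h.2 j hj).symm⟩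

def hammingGraph (ι α : Type*) : SimpleGraph (ι → α) where
  Adj f g := ∃ i, DiffOnlyAt f g i
  symm := ⟨fun _ _ ⟨i, h⟩ => ⟨i, h.symm⟩⟩
  loopless := ⟨fun _ ⟨_, h⟩ => h.1 rfl⟩

namespace hammingGraph

variable {ι κ α β : Type*}

theorem adj_iff {f g : ι → α} : (hammingGraph ι α).Adj f g ↔ ∃ i, DiffOnlyAt f g i := Iff.rfl

instance [Fintype ι] [DecidableEq ι] [DecidableEq α] : DecidableRel (hammingGraph ι α).Adj :=
  fun f g => decidable_of_iff (∃ i, f i ≠ g i ∧ ∀ j, j ≠ i → f j = g j) Iff.rfl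

theorem adj_iff_of_ne_iff {e : ι → κ} (he : e.Injective) {f g : ι → α} {F G : κ → β}
    (h : ∀ k, F k ≠ G k ↔ ∃ i, e i = k ∧ f i ≠ g i) :
    (hammingGraph κ β).Adj F G ↔ (hammingGraph ι α).Adj f g := by
  simp only [adj_iff]
  constructor
  · rintro ⟨k, hk, hF⟩
    obtain ⟨i, rfl, hi⟩ := (h k).1 hk
    refine ⟨i, hi, fun j hj => not_not.1 fun hfg => ?_⟩
    exact (h (e j)).2 ⟨j, rfl, hfg⟩ (hF (e j) (he.ne hj))
  · rintro ⟨i, hi, hf⟩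
    refine ⟨e i, (h (e i)).2 ⟨i, rfl, hi⟩, fun k hk => not_not.1 fun hFG => ?_⟩
    obtain ⟨j, rfl, hj⟩ := (h k).1 hFG
    exact hj (hf j fun hji => hk (hji ▸ rfl))

theorem eq_or_adj_of_diffOnlyAt {f g h : ι → α} {i : ι} (hfg : DiffOnlyAt f g i)
    (hgh : DiffOnlyAt g h i) : f = h ∨ (hammingGraph ι α).Adj f h := by
  have hoff : ∀ j, j ≠ i → f j = h j := fun j hj => (hfg.2 j hj).trans (hgh.2 j hj)
  by_cases hi : f i = h i
  · refine Or.inl (funext fun j => ?_)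
    by_cases hj : j = i
    · exact hj ▸ hi
    · exact hoff j hj
  · exact Or.inr ⟨i, hi, hoff⟩

end hammingGraph

theorem Fin.apply_eq_apply_add_one_of_forall_ne {n : ℕ} [NeZero n] {β : Type*} (f : Fin n → β)
    (t₀ : Fin n) (h : ∀ t, t ≠ t₀ → f t = f (t + 1)) : f t₀ = f (t₀ + 1) := by
  obtain ⟨m, rfl⟩ := Nat.exists_eq_succ_of_ne_zero (NeZero.ne n)
  have key : ∀ i : Fin (m + 1), f (t₀ + 1 + i) = f (t₀ + 1) := by
    intro i
    induction i using Fin.induction with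
    | zero => rw [add_zero]
    | succ i ih =>
      have hne : t₀ + 1 + i.castSucc ≠ t₀ := by
        rw [Ne, add_assoc, add_eq_left, add_comm, Fin.coeSucc_eq_succ]
        exact Fin.succ_ne_zero i
      rw [← Fin.coeSucc_eq_succ, ← add_assoc, ← h _ hne, ih]
  have := key (Fin.last m)
  rw [add_assoc, add_comm 1, Fin.last_add_one, add_zero] at this
  exact this

theorem Fin.exists_apply_eq_apply_add_one_of_five {β : Type*} (d : Fin 5 → β)
    (hrep : ∀ t, ∃ s, s ≠ t ∧ d s = d t) : ∃ t, d t = d (t + 1) := by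
  by_contra! hne
  simp only [Fin.forall_iff_succ, Fin.exists_iff_succ] at hrep hne
  grind

theorem hammingGraph.isEmpty_embedding_cycleGraph_five (ι α : Type*) :
    IsEmpty (cycleGraph 5 ↪g hammingGraph ι α) := by
  refine ⟨fun e => ?_⟩
  have cycle_adj : ∀ t : Fin 5, (cycleGraph 5).Adj t (t + 1) := by decide
  have cycle_ne : ∀ t : Fin 5, t ≠ t + 1 + 1 := by decide
  have cycle_not_adj : ∀ t : Fin 5, ¬(cycleGraph 5).Adj t (t + 1 + 1) := by decide
  choose d hd using fun t => e.map_rel_iff.2 (cycle_adj t)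
  have hconsec : ∀ t, d t ≠ d (t + 1) := by
    intro t hdt
    rcases hammingGraph.eq_or_adj_of_diffOnlyAt (hd t) (hdt ▸ hd (t + 1)) with heq | hadj
    · exact cycle_ne t (e.injective heq)
    · exact cycle_not_adj t (e.map_rel_iff.1 hadj)
  have hrep : ∀ t, ∃ s, s ≠ t ∧ d s = d t := by
    intro t
    by_contra! hd'
    refine (hd t).1 (Fin.apply_eq_apply_add_one_of_forall_ne (fun s => e s (d t)) t ?_)
    exact fun s hs => (hd s).2 (d t) (hd' s hs).symm
  obtain ⟨t, ht⟩ := Fin.exists_apply_eq_apply_add_one_of_five d hrep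
  exact hconsec t ht

namespace Geodesic

variable {V : Type*} {G : SimpleGraph V} {a b : V}

def vertexSeq (U : Geodesic G a b) (j : ℕ) : V := U.1.support.getD j a

theorem vertexSeq_injective : (vertexSeq : Geodesic G a b → ℕ → V).Injective := by
  intro U W h
  have hlen : U.1.support.length = W.1.support.length := by
    rw [Walk.length_support, Walk.length_support, U.2.2, W.2.2]
  refine Subtype.ext (Walk.ext_support (List.ext_getElem hlen fun j hU hW => ?_))
  simpa only [vertexSeq, List.getD_eq_getElem _ _ hU, List.getD_eq_getElem _ _ hW]
    using congrFun h j

end Geodesic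

def SPG.embeddingHammingGraph {V : Type*} (G : SimpleGraph V) (a b : V) :
    SPG G a b ↪g hammingGraph ℕ V :=
  ⟨⟨Geodesic.vertexSeq, Geodesic.vertexSeq_injective⟩, Iff.rfl⟩

namespace SimpleGraph.Walk

variable {V : Type*} {G : SimpleGraph V}

def ofFun (c : ℕ → V) (n : ℕ) (h : ∀ i, i < n → G.Adj (c i) (c (i + 1))) : G.Walk (c 0) (c n) :=
  (ofSupport ((List.range (n + 1)).map c) (by simp)
    (by rw [List.isChain_map, List.isChain_range_succ]; exact h)).copy (by simp)
    (by simp [List.getLast_map, List.getLast_range])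

@[simp]
theorem support_ofFun (c : ℕ → V) (n : ℕ) (h : ∀ i, i < n → G.Adj (c i) (c (i + 1))) :
    (ofFun c n h).support = (List.range (n + 1)).map c := by
  simp [ofFun]

@[simp]
theorem length_ofFun (c : ℕ → V) (n : ℕ) (h : ∀ i, i < n → G.Adj (c i) (c (i + 1))) :
    (ofFun c n h).length = n := by
  simp [ofFun]

end SimpleGraph.Walk

def layerGraph (α : Type*) : SimpleGraph (ℕ × α) where
  Adj u v := u.1 + 1 = v.1 ∨ v.1 + 1 = u.1
  symm := ⟨fun _ _ => Or.symm⟩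
  loopless := ⟨fun _ h => by omega⟩

namespace layerGraph

variable {α : Type*}

theorem adj_iff {u v : ℕ × α} : (layerGraph α).Adj u v ↔ u.1 + 1 = v.1 ∨ v.1 + 1 = u.1 :=
  Iff.rfl

theorem fst_le_fst_add_length {u v : ℕ × α} (p : (layerGraph α).Walk u v) :
    v.1 ≤ u.1 + p.length := by
  induction p with
  | nil => simp
  | cons h _ ih =>
    rw [adj_iff] at h
    rw [Walk.length_cons]
    omega

variable [Inhabited α] {m : ℕ}

def pad (f : Fin m → α) : ℕ → α
  | 0 => default
  | i + 1 => if h : i < m then f ⟨i, h⟩ else default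

def layerVertex (f : Fin m → α) (i : ℕ) : ℕ × α := (i, pad f i)

theorem layerVertex_adj (f : Fin m → α) (i : ℕ) :
    (layerGraph α).Adj (layerVertex f i) (layerVertex f (i + 1)) :=
  Or.inl rfl

theorem layerVertex_zero (f : Fin m → α) : layerVertex f 0 = (0, default) := rfl

theorem layerVertex_succ_self (f : Fin m → α) : layerVertex f (m + 1) = (m + 1, default) := by
  simp [layerVertex, pad]

def layerWalk (f : Fin m → α) : (layerGraph α).Walk (0, default) (m + 1, default) :=
  (Walk.ofFun (layerVertex f) (m + 1) fun i _ => layerVertex_adj f i).copy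
    (layerVertex_zero f) (layerVertex_succ_self f)

theorem support_layerWalk (f : Fin m → α) :
    (layerWalk f).support = (List.range (m + 2)).map (layerVertex f) := by
  simp [layerWalk]

theorem length_layerWalk (f : Fin m → α) : (layerWalk f).length = m + 1 := by
  simp [layerWalk]

theorem dist_eq : (layerGraph α).dist (0, default) (m + 1, default) = m + 1 := by
  let p₀ := layerWalk (fun _ : Fin m => (default : α))
  obtain ⟨p, hp⟩ := p₀.reachable.exists_walk_length_eq_dist
  refine le_antisymm ?_ ?_
  · simpa only [p₀, length_layerWalk] using dist_le p₀
  · simpa [hp] using fst_le_fst_add_length p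

def geodesic (f : Fin m → α) : Geodesic (layerGraph α) (0, default) (m + 1, default) :=
  ⟨layerWalk f, by
    rw [Walk.isPath_def, support_layerWalk]
    exact List.nodup_range.map fun i j h => congrArg Prod.fst h,
   by rw [dist_eq, length_layerWalk]⟩

theorem pad_ne_pad_iff (f g : Fin m → α) (j : ℕ) :
    pad f j ≠ pad g j ↔ ∃ i : Fin m, i.val + 1 = j ∧ f i ≠ g i := by
  cases j with
  | zero => simp [pad]
  | succ j =>
    by_cases hj : j < m
    · simp only [pad, hj, dite_true, add_left_inj]
      exact ⟨fun h => ⟨⟨j, hj⟩, rfl, h⟩, by rintro ⟨i, rfl, hi⟩; exact hi⟩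
    · simp only [pad, hj, dite_false, ne_eq, not_true_eq_false, add_left_inj, false_iff]
      rintro ⟨i, rfl, -⟩
      exact hj i.isLt

-- Past the end of the path `getD` returns the start vertex, which is `layerVertex f 0`.
theorem vertexSeq_geodesic (f : Fin m → α) (j : ℕ) :
    (geodesic f).vertexSeq j = layerVertex f (if j < m + 2 then j else 0) := by
  rw [Geodesic.vertexSeq, geodesic, support_layerWalk, ← layerVertex_zero f, List.getD_map]
  split_ifs with hj
  · rw [List.getD_eq_getElem _ _ (by simpa using hj), List.getElem_range]
  · rw [List.getD_eq_default _ _ (by simpa using hj)]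

theorem vertexSeq_geodesic_ne_iff (f g : Fin m → α) (j : ℕ) :
    (geodesic f).vertexSeq j ≠ (geodesic g).vertexSeq j ↔
      ∃ i : Fin m, i.val + 1 = j ∧ f i ≠ g i := by
  simp only [vertexSeq_geodesic, layerVertex, ne_eq, Prod.mk.injEq, true_and]
  split_ifs with hj
  · exact pad_ne_pad_iff f g j
  · simp only [pad, not_true_eq_false, false_iff, not_exists, not_and]
    omega

end layerGraph

def hammingGraph.embeddingSPG (α : Type*) [Inhabited α] (m : ℕ) :
    hammingGraph (Fin m) α ↪g SPG (layerGraph α) (0, default) (m + 1, default) where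
  toFun := layerGraph.geodesic
  inj' f g h := funext fun i => not_not.1 fun hi =>
    (layerGraph.vertexSeq_geodesic_ne_iff f g (i + 1)).2 ⟨i, rfl, hi⟩ (h ▸ rfl)
  map_rel_iff' {f g} :=
    hammingGraph.adj_iff_of_ne_iff (fun _ _ h => Fin.ext (Nat.succ_injective h))
      (layerGraph.vertexSeq_geodesic_ne_iff f g)

theorem cycleGraph_adj_iff_val {n : ℕ} {u v : Fin (n + 2)} :
    (cycleGraph (n + 2)).Adj u v ↔ u.val + 1 = v.val ∨ v.val + 1 = u.val ∨
      (u.val = n + 1 ∧ v.val = 0) ∨ (v.val = n + 1 ∧ u.val = 0) := by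
  rw [cycleGraph_adj, sub_eq_iff_eq_add, sub_eq_iff_eq_add, Fin.ext_iff, Fin.ext_iff,
    add_comm 1, add_comm 1, Fin.val_add_one, Fin.val_add_one]
  split_ifs with hu hv hv <;> simp only [Fin.ext_iff, Fin.val_last] at hu hv <;> omega

theorem hammingGraph.snoc_adj_snoc_iff {m : ℕ} {α : Type*} {u v : Fin m → α} {x y : α} :
    (hammingGraph (Fin (m + 1)) α).Adj (Fin.snoc u x) (Fin.snoc v y) ↔
      (x = y ∧ (hammingGraph (Fin m) α).Adj u v) ∨ (x ≠ y ∧ u = v) := by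
  by_cases hxy : x = y
  · subst hxy
    simp only [true_and, ne_eq, not_true_eq_false, false_and, or_false]
    refine adj_iff_of_ne_iff (Fin.castSucc_injective m) fun j => ?_
    induction j using Fin.lastCases with
    | last => simp [Fin.castSucc_ne_last]
    | cast j => simp [Fin.castSucc_inj]
  · simp only [hxy, false_and, ne_eq, not_false_eq_true, true_and, false_or]
    constructor
    · rintro ⟨i, -, hoff⟩
      obtain rfl : i = Fin.last m :=
        by_contra fun hi => hxy (by simpa using hoff (Fin.last m) (Ne.symm hi))
      exact funext fun j => by simpa using hoff j.castSucc (Fin.castSucc_ne_last j)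
    · rintro rfl
      refine ⟨Fin.last m, by simpa using hxy, fun j hj => ?_⟩
      obtain ⟨j, rfl⟩ := Fin.exists_castSucc_eq.2 hj
      simp

namespace cycleGraph

variable {k : ℕ}

/- The stretched cycle is `(c₀,x),(c₀,y),(c₁,y),(c₂,y),(c₂,x),(c₃,x),…,(c_{k+3},x)`: the path
`c₀c₁c₂` is lifted to the new letter `y` at the detour positions `1,2,3`. -/
def stretchIndex (t : Fin (k + 6)) : Fin (k + 4) :=
  ⟨if t.val = 0 then 0 else if t.val ≤ 3 then t.val - 1 else t.val - 2, by split_ifs <;> omega⟩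

def IsDetour (t : Fin (k + 6)) : Prop := 1 ≤ t.val ∧ t.val ≤ 3

theorem val_stretchIndex (t : Fin (k + 6)) : (stretchIndex t).val =
    if t.val = 0 then 0 else if t.val ≤ 3 then t.val - 1 else t.val - 2 :=
  rfl

instance (t : Fin (k + 6)) : Decidable (IsDetour t) := inferInstanceAs (Decidable (_ ∧ _))

theorem eq_of_stretchIndex_eq {s t : Fin (k + 6)} (hi : stretchIndex s = stretchIndex t)
    (hd : IsDetour s ↔ IsDetour t) : s = t := by
  simp only [Fin.ext_iff, val_stretchIndex, IsDetour] at hi hd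
  ext
  split_ifs at hi <;> omega

theorem adj_iff_stretchIndex {s t : Fin (k + 6)} :
    (cycleGraph (k + 6)).Adj s t ↔
      ((IsDetour s ↔ IsDetour t) ∧ (cycleGraph (k + 4)).Adj (stretchIndex s) (stretchIndex t)) ∨
      (¬(IsDetour s ↔ IsDetour t) ∧ stretchIndex s = stretchIndex t) := by
  rw [cycleGraph_adj_iff_val, cycleGraph_adj_iff_val, Fin.ext_iff, val_stretchIndex,
    val_stretchIndex, IsDetour, IsDetour]
  split_ifs <;> (try simp only [false_or, or_false, false_and, and_false, and_true]) <;> omega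

end cycleGraph

theorem ite_eq_ite_iff_of_ne {α : Type*} {p q : Prop} [Decidable p] [Decidable q] {x y : α}
    (hxy : x ≠ y) : ((if p then y else x) = if q then y else x) ↔ (p ↔ q) := by
  split_ifs <;> simp_all [hxy.symm]

def cycleGraph.stretchEmbedding {k m : ℕ} {α : Type*}
    (e : cycleGraph (k + 4) ↪g hammingGraph (Fin m) α) {x y : α} (hxy : x ≠ y) :
    cycleGraph (k + 6) ↪g hammingGraph (Fin (m + 1)) α where
  toFun t := Fin.snoc (e (stretchIndex t)) (if IsDetour t then y else x)
  inj' s t h := by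
    obtain ⟨hi, hd⟩ := Fin.snoc_inj.1 h
    exact eq_of_stretchIndex_eq (e.injective hi) ((ite_eq_ite_iff_of_ne hxy).1 hd)
  map_rel_iff' {s t} := by
    change (hammingGraph _ α).Adj (Fin.snoc _ _) (Fin.snoc _ _) ↔ _
    rw [hammingGraph.snoc_adj_snoc_iff, e.map_rel_iff, e.injective.eq_iff, ne_eq,
      ite_eq_ite_iff_of_ne hxy, adj_iff_stretchIndex]

def cycleGraph.embeddingHamming₃ : cycleGraph 3 ↪g hammingGraph (Fin 1) (Fin 3) :=
  ⟨⟨![![0], ![1], ![2]], by decide⟩, by decide⟩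

def cycleGraph.embeddingHamming₄ : cycleGraph 4 ↪g hammingGraph (Fin 2) (Fin 3) :=
  ⟨⟨![![0, 0], ![1, 0], ![1, 1], ![0, 1]], by decide⟩, by decide⟩

def cycleGraph.embeddingHamming₇ : cycleGraph 7 ↪g hammingGraph (Fin 3) (Fin 3) :=
  ⟨⟨![![0, 0, 0], ![1, 0, 0], ![1, 1, 0], ![2, 1, 0], ![2, 1, 1], ![0, 1, 1], ![0, 0, 1]],
    by decide⟩, by decide⟩

theorem cycleGraph.exists_embedding_hammingGraph :
    ∀ k, 3 ≤ k → k ≠ 5 → ∃ m, Nonempty (cycleGraph k ↪g hammingGraph (Fin m) (Fin 3))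
  | 3, _, _ => ⟨1, ⟨embeddingHamming₃⟩⟩
  | 4, _, _ => ⟨2, ⟨embeddingHamming₄⟩⟩
  | 6, _, _ => ⟨3, ⟨stretchEmbedding embeddingHamming₄ zero_ne_one⟩⟩
  | 7, _, _ => ⟨3, ⟨embeddingHamming₇⟩⟩
  | k + 8, _, _ =>
    have ⟨m, ⟨e⟩⟩ := exists_embedding_hammingGraph (k + 6) (by omega) (by omega)
    ⟨m + 1, ⟨stretchEmbedding e zero_ne_one⟩⟩

theorem stmt16 (k : ℕ) (hk : 3 ≤ k) :
    (∃ (V : Type) (G : SimpleGraph V) (a b : V), a ≠ b ∧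
      Nonempty (cycleGraph k ↪g SPG G a b)) ↔ k ≠ 5 := by
  constructor
  · rintro ⟨V, G, a, b, -, ⟨e⟩⟩ rfl
    exact (hammingGraph.isEmpty_embedding_cycleGraph_five ℕ V).false
      (e.trans (SPG.embeddingHammingGraph G a b))
  · intro h5
    obtain ⟨m, ⟨e⟩⟩ := cycleGraph.exists_embedding_hammingGraph k hk h5
    exact ⟨ℕ × Fin 3, layerGraph (Fin 3), (0, default), (m + 1, default), by simp,
      ⟨e.trans (hammingGraph.embeddingSPG (Fin 3) m)⟩⟩
end
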